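/- arXiv:2111.07112 — 2 statements merged into one kernel-verified Lean document; each statement's English description precedes it below -/
import Mathlib

section
/- Let 0 < ε ≤ 1 and let f_ε(r) = arctan(r/ε²) + (arctan ε)·r/ε for r ∈ [0, ε]. Then: (i) for every r ∈ [0, ε], ε²/2 ≤ 1/f_ε'(r) ≤ 2, i.e. 1/2 ≤ f_ε'(r) ≤ 2·ε^{-2}; (ii) for every r ∈ [0, ε²], 1/f_ε'(r) ≤ 2·ε²; (iii) for every r ∈ [0, ε], 2·ε²·r·(r² + ε⁴)^{-2}·(f_ε'(r))^{-3} ≤ 4·ε^{-1}; and (iv) for every r ∈ [0, ε²], 2·ε²·r·(r² + ε⁴)^{-2}·(f_ε'(r))^{-3} ≤ 4·ε². -/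
open MeasureTheory Filter Topology Real

/-- The derivative of the zenith-angle function `f_ε`:
`f_ε'(r) = ε²/(ε⁴ + r²) + (arctan ε)/ε`. -/
noncomputable def fder (ε r : ℝ) : ℝ := ε ^ 2 / (ε ^ 4 + r ^ 2) + Real.arctan ε / ε

lemma arctan_nonneg' {x : ℝ} (hx : 0 ≤ x) : 0 ≤ Real.arctan x := by
  simpa [Real.arctan_zero] using Real.arctan_strictMono.monotone hx

lemma arctan_le_self' {x : ℝ} (hx : 0 ≤ x) : Real.arctan x ≤ x := by
  have h := Real.le_tan (arctan_nonneg' hx) (Real.arctan_lt_pi_div_two x)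
  simpa [Real.tan_arctan] using h

lemma fder_lb (ε r : ℝ) (hε0 : 0 < ε) (hr : 0 ≤ r) :
    ε ^ 2 / (ε ^ 4 + r ^ 2) ≤ fder ε r := by
  have : 0 ≤ Real.arctan ε / ε := div_nonneg (arctan_nonneg' hε0.le) hε0.le
  simp [fder]; linarith

lemma Ebound (ε r : ℝ) (hε0 : 0 < ε) (hr : 0 ≤ r) :
    2 * ε ^ 2 * r * ((r ^ 2 + ε ^ 4) ^ 2)⁻¹ * ((fder ε r) ^ 3)⁻¹ ≤
      2 * r * (r ^ 2 + ε ^ 4) / ε ^ 4 := by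
  have hA : (0 : ℝ) < ε ^ 4 + r ^ 2 := by positivity
  have hq : (0 : ℝ) < ε ^ 2 / (ε ^ 4 + r ^ 2) := by positivity
  have hf := fder_lb ε r hε0 hr
  have hf0 : 0 < fder ε r := lt_of_lt_of_le hq hf
  have h3 : (ε ^ 2 / (ε ^ 4 + r ^ 2)) ^ 3 ≤ (fder ε r) ^ 3 :=
    pow_le_pow_left₀ hq.le hf 3
  have hinv : ((fder ε r) ^ 3)⁻¹ ≤ ((ε ^ 2 / (ε ^ 4 + r ^ 2)) ^ 3)⁻¹ :=
    inv_anti₀ (by positivity) h3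
  calc 2 * ε ^ 2 * r * ((r ^ 2 + ε ^ 4) ^ 2)⁻¹ * ((fder ε r) ^ 3)⁻¹
      ≤ 2 * ε ^ 2 * r * ((r ^ 2 + ε ^ 4) ^ 2)⁻¹ * ((ε ^ 2 / (ε ^ 4 + r ^ 2)) ^ 3)⁻¹ := by
        apply mul_le_mul_of_nonneg_left hinv
        positivity
    _ = 2 * r * (r ^ 2 + ε ^ 4) / ε ^ 4 := by
        field_simp
        ring

/-- for `0 < ε ≤ 1`:
(i) for every `r ∈ [0, ε]`, `ε²/2 ≤ 1/f_ε'(r) ≤ 2`;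
(ii) for every `r ∈ [0, ε²]`, `1/f_ε'(r) ≤ 2·ε²`;
(iii) for every `r ∈ [0, ε]`, `2·ε²·r·(r² + ε⁴)^{-2}·(f_ε'(r))^{-3} ≤ 4·ε^{-1}`;
(iv) for every `r ∈ [0, ε²]`, `2·ε²·r·(r² + ε⁴)^{-2}·(f_ε'(r))^{-3} ≤ 4·ε²`.
(These are the bounds on `g_ε'` and `g_ε''` for the inverse `g_ε` of `f_ε`.) -/
theorem g_derivative_bounds (ε : ℝ) (hε0 : 0 < ε) (hε1 : ε ≤ 1) :
    (∀ r ∈ Set.Icc (0 : ℝ) ε, ε ^ 2 / 2 ≤ (fder ε r)⁻¹ ∧ (fder ε r)⁻¹ ≤ 2) ∧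
      (∀ r ∈ Set.Icc (0 : ℝ) (ε ^ 2), (fder ε r)⁻¹ ≤ 2 * ε ^ 2) ∧
      (∀ r ∈ Set.Icc (0 : ℝ) ε,
        2 * ε ^ 2 * r * ((r ^ 2 + ε ^ 4) ^ 2)⁻¹ * ((fder ε r) ^ 3)⁻¹ ≤ 4 * ε⁻¹) ∧
      ∀ r ∈ Set.Icc (0 : ℝ) (ε ^ 2),
        2 * ε ^ 2 * r * ((r ^ 2 + ε ^ 4) ^ 2)⁻¹ * ((fder ε r) ^ 3)⁻¹ ≤ 4 * ε ^ 2 := by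
  have hat : Real.arctan ε / ε ≤ 1 := by
    rw [div_le_one hε0]; exact arctan_le_self' hε0.le
  refine ⟨?_, ?_, ?_, ?_⟩
  · rintro r ⟨hr0, hrε⟩
    have hA : (0 : ℝ) < ε ^ 4 + r ^ 2 := by positivity
    have hlb : (1 : ℝ) / 2 ≤ fder ε r := by
      have h1 : (1 : ℝ) / 2 ≤ ε ^ 2 / (ε ^ 4 + r ^ 2) := by
        rw [div_le_div_iff₀ (by norm_num) hA]
        have hr2 : r ^ 2 ≤ ε ^ 2 := by nlinarith
        have he4 : ε ^ 4 ≤ ε ^ 2 := by nlinarith [mul_nonneg (sq_nonneg ε) (show (0:ℝ) ≤ 1 - ε ^ 2 by nlinarith)]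
        nlinarith
      exact h1.trans (fder_lb ε r hε0 hr0)
    have hf0 : 0 < fder ε r := lt_of_lt_of_le (by norm_num) hlb
    constructor
    · have hub : fder ε r ≤ 2 / ε ^ 2 := by
        have h1 : ε ^ 2 / (ε ^ 4 + r ^ 2) ≤ 1 / ε ^ 2 := by
          rw [div_le_div_iff₀ hA (by positivity)]
          nlinarith [sq_nonneg r]
        have h2 : Real.arctan ε / ε ≤ 1 / ε ^ 2 := by
          refine hat.trans ?_
          rw [le_div_iff₀ (by positivity)]
          nlinarith
        have h3 : fder ε r ≤ 1 / ε ^ 2 + 1 / ε ^ 2 := add_le_add h1 h2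
        have h4 : 1 / ε ^ 2 + 1 / ε ^ 2 = 2 / ε ^ 2 := by ring
        linarith
      have := inv_anti₀ hf0 hub
      calc ε ^ 2 / 2 = (2 / ε ^ 2)⁻¹ := by
            field_simp
        _ ≤ (fder ε r)⁻¹ := this
    · have := inv_anti₀ (by norm_num : (0:ℝ) < 1/2) hlb
      simpa using this
  · rintro r ⟨hr0, hrε⟩
    have hA : (0 : ℝ) < ε ^ 4 + r ^ 2 := by positivity
    have hlb : (2 * ε ^ 2)⁻¹ ≤ fder ε r := by
      have h1 : (2 * ε ^ 2)⁻¹ ≤ ε ^ 2 / (ε ^ 4 + r ^ 2) := by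
        rw [inv_eq_one_div, div_le_div_iff₀ (by positivity) hA]
        nlinarith
      exact h1.trans (fder_lb ε r hε0 hr0)
    have hf0 : 0 < fder ε r := lt_of_lt_of_le (by positivity) hlb
    have := inv_anti₀ (by positivity : (0:ℝ) < (2 * ε ^ 2)⁻¹) hlb
    simpa using this
  · rintro r ⟨hr0, hrε⟩
    refine (Ebound ε r hε0 hr0).trans ?_
    rw [div_le_iff₀ (by positivity)]
    have : 4 * ε⁻¹ * ε ^ 4 = 4 * ε ^ 3 := by field_simp
    rw [this]
    have h1 : r ^ 3 ≤ ε ^ 3 := pow_le_pow_left₀ hr0 hrε 3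
    have h2 : r * ε ^ 4 ≤ ε ^ 5 := by nlinarith [pow_pos hε0 4]
    have h3 : ε ^ 5 ≤ ε ^ 3 := by
      nlinarith [mul_nonneg (pow_nonneg hε0.le 3) (show (0:ℝ) ≤ 1 - ε ^ 2 by nlinarith)]
    nlinarith
  · rintro r ⟨hr0, hrε⟩
    refine (Ebound ε r hε0 hr0).trans ?_
    rw [div_le_iff₀ (by positivity)]
    have hr2 : r ^ 2 ≤ ε ^ 4 := by nlinarith
    have h : r ^ 2 + ε ^ 4 ≤ 2 * ε ^ 4 := by linarith
    nlinarith [mul_le_mul hrε h (by positivity : (0:ℝ) ≤ r ^ 2 + ε ^ 4)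
      (by positivity : (0:ℝ) ≤ ε ^ 2)]
end

section
/- Let ε > 0 and let f_ε(r) = arctan(r/ε²) + (arctan ε)·r/ε for r ∈ [0, ε]. Then for every r ∈ [0, ε): cos(f_ε(r))/f_ε'(r) < ε − r·sin(f_ε(r)). -/
open MeasureTheory Filter Topology Real

/-- The zenith-angle function `f_ε(r) = arctan(r/ε²) + (arctan ε)·r/ε`. -/
noncomputable def fe (ε r : ℝ) : ℝ := Real.arctan (r / ε ^ 2) + Real.arctan ε * r / ε

/-!
For `Φ(x) = f'(x)(c - x sin f(x)) - cos f(x)` the `sin f` terms cancel in the derivative: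
`Φ' = f''·(c - x sin f) - x f'² cos f`. When `f` is strictly concave on `(0, c)` with values in
`[0, π/2]`, this is negative, so `Φ` decreases strictly on `[0, c]`, while `f(c) = π/2` gives
`Φ(c) = 0`. Hence `Φ > 0` on `[0, c)`; for `f = f_ε`, `c = ε` this is the claim multiplied by
`f_ε' > 0`.
-/

open Set

noncomputable def cosDefect (f f' : ℝ → ℝ) (c x : ℝ) : ℝ :=
  f' x * (c - x * sin (f x)) - cos (f x)

section cosDefect

variable {f f' f'' : ℝ → ℝ} {c : ℝ}

theorem hasDerivAt_cosDefect {x : ℝ} (hf : HasDerivAt f (f' x) x)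
    (hf' : HasDerivAt f' (f'' x) x) :
    HasDerivAt (cosDefect f f' c)
      (f'' x * (c - x * sin (f x)) - x * f' x ^ 2 * cos (f x)) x := by
  have hsin := (hasDerivAt_sin (f x)).comp x hf
  have hcos := (hasDerivAt_cos (f x)).comp x hf
  refine ((hf'.mul (((hasDerivAt_id x).mul hsin).const_sub c)).sub hcos).congr_deriv ?_
  simp only [Pi.mul_apply, Function.comp_apply, id]
  ring

theorem cosDefect_self (hc : f c = π / 2) : cosDefect f f' c c = 0 := by
  simp [cosDefect, hc]

theorem cosDefect_strictAntiOn (hf : ∀ x, HasDerivAt f (f' x) x)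
    (hf' : ∀ x, HasDerivAt f' (f'' x) x) (hf''_neg : ∀ x ∈ Ioo 0 c, f'' x < 0)
    (hcos : ∀ x ∈ Ioo 0 c, 0 ≤ cos (f x)) :
    StrictAntiOn (cosDefect f f' c) (Icc 0 c) := by
  have hderiv x := hasDerivAt_cosDefect (c := c) (hf x) (hf' x)
  refine strictAntiOn_of_deriv_neg (convex_Icc 0 c)
    (fun x _ => (hderiv x).continuousAt.continuousWithinAt) fun x hx => ?_
  rw [interior_Icc] at hx
  rw [(hderiv x).deriv]
  have hslack : 0 < c - x * sin (f x) := by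
    nlinarith [hx.1, hx.2, sin_le_one (f x)]
  have : 0 ≤ x * f' x ^ 2 * cos (f x) := by
    have := hcos x hx
    have := hx.1.le
    positivity
  nlinarith [mul_neg_of_neg_of_pos (hf''_neg x hx) hslack]

theorem cosDefect_pos (hf : ∀ x, HasDerivAt f (f' x) x)
    (hf' : ∀ x, HasDerivAt f' (f'' x) x) (hf''_neg : ∀ x ∈ Ioo 0 c, f'' x < 0)
    (hcos : ∀ x ∈ Ioo 0 c, 0 ≤ cos (f x)) (hc : f c = π / 2) {r : ℝ} (hr : r ∈ Ico 0 c) :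
    0 < cosDefect f f' c r := by
  rw [← cosDefect_self (f' := f') hc]
  exact cosDefect_strictAntiOn hf hf' hf''_neg hcos (Ico_subset_Icc_self hr)
    (right_mem_Icc.2 (hr.1.trans hr.2.le)) hr.2

end cosDefect

section fe

variable {ε : ℝ}

theorem fder_pos (hε : 0 < ε) (x : ℝ) : 0 < fder ε x := by
  have : 0 < arctan ε := arctan_zero ▸ arctan_strictMono hε
  unfold fder
  positivity

theorem hasDerivAt_fe (hε : 0 < ε) (x : ℝ) : HasDerivAt (fe ε) (fder ε x) x := by
  have h := ((hasDerivAt_arctan (x / ε ^ 2)).comp x ((hasDerivAt_id x).div_const (ε ^ 2))).add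
    (((hasDerivAt_id x).const_mul (arctan ε)).div_const ε)
  refine h.congr_deriv ?_
  have : 0 < ε ^ 4 + x ^ 2 := by positivity
  simp only [fder]
  field_simp

theorem hasDerivAt_fder (hε : 0 < ε) (x : ℝ) :
    HasDerivAt (fder ε) (-(2 * ε ^ 2 * x) / (ε ^ 4 + x ^ 2) ^ 2) x := by
  have h := ((hasDerivAt_const x (ε ^ 2)).div ((hasDerivAt_pow 2 x).const_add (ε ^ 4))
    (by positivity)).add_const (arctan ε / ε)
  refine h.congr_deriv ?_
  ring

theorem fe_strictMono (hε : 0 < ε) : StrictMono (fe ε) :=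
  strictMono_of_deriv_pos fun x => (hasDerivAt_fe hε x).deriv ▸ fder_pos hε x

theorem fe_zero : fe ε 0 = 0 := by simp [fe]

theorem fe_self (hε : 0 < ε) : fe ε ε = π / 2 := by
  have : ε / ε ^ 2 = ε⁻¹ := by field_simp
  rw [fe, this, mul_div_cancel_right₀ _ hε.ne', arctan_inv_of_pos hε]
  ring

theorem cos_fe_nonneg (hε : 0 < ε) {x : ℝ} (hx : x ∈ Icc 0 ε) : 0 ≤ cos (fe ε x) := by
  have h0 := (fe_strictMono hε).monotone hx.1
  have h1 := (fe_strictMono hε).monotone hx.2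
  rw [fe_zero] at h0
  rw [fe_self hε] at h1
  exact cos_nonneg_of_mem_Icc ⟨by linarith [pi_pos], h1⟩

end fe

/-- for `ε > 0` and every `r ∈ [0, ε)`,
`cos(f_ε(r))/f_ε'(r) < ε − r·sin(f_ε(r))`.
(In terms of the inverse `g_ε` of `f_ε`: `g_ε'(φ)·cos φ < ε − g_ε(φ)·sin φ` on `[0, π/2)`.) -/
theorem gprime_cos_lt (ε : ℝ) (hε : 0 < ε) :
    ∀ r ∈ Set.Ico (0 : ℝ) ε,
      Real.cos (fe ε r) / fder ε r < ε - r * Real.sin (fe ε r) := by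
  intro r hr
  have hfder_neg : ∀ x ∈ Ioo 0 ε, -(2 * ε ^ 2 * x) / (ε ^ 4 + x ^ 2) ^ 2 < 0 := fun x hx =>
    div_neg_of_neg_of_pos (by nlinarith [pow_pos hε 2, hx.1]) (by positivity)
  have hdefect := cosDefect_pos (hasDerivAt_fe hε) (hasDerivAt_fder hε) hfder_neg
    (fun x hx => cos_fe_nonneg hε (Ioo_subset_Icc_self hx)) (fe_self hε) hr
  rw [div_lt_iff₀ (fder_pos hε r), mul_comm]
  exact sub_pos.1 hdefect
end
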